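/- arXiv:1910.07923 — 5 statements merged into one kernel-verified Lean document; each statement's English description precedes it below -/
import Mathlib

section
/- Let M and N be metric spaces and let φ: N → M be a Lipschitz map whose least Lipschitz constant is at most 1. Let A be a subset of {(x,y) ∈ M × M : x ≠ y} such that: (1) for every Lipschitz function f: M → ℝ one has ‖f‖ = sup{(f(x) − f(y))/d(x,y) : (x,y) ∈ A}; and (2) for every (x,y) ∈ A there exist sequences (x_n), (y_n) in N with φ(x_n) ≠ φ(y_n) for every n, φ(x_n) → x, φ(y_n) → y, and d(φ(x_n), φ(y_n))/d(x_n, y_n) → 1. Then for every Lipschitz function f: M → ℝ one has ‖f ∘ φ‖ = ‖f‖, i.e. the composition operator C_φ is isometric. -/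
open Filter Topology

/-- The least Lipschitz constant (Lipschitz norm) of a real-valued function on a metric
space, expressed as `sup {(f x - f y)/d(x,y) : x ≠ y}`. -/
noncomputable def lipNorm {M : Type*} [MetricSpace M] (f : M → ℝ) : ℝ :=
  sSup {r : ℝ | ∃ x y : M, x ≠ y ∧ r = (f x - f y) / dist x y}

/-!
The inequality `‖f ∘ φ‖ ≤ ‖f‖` holds for every `1`-Lipschitz `φ`. Conversely, each slope
`(f x - f y) / d(x, y)` over `(x, y) ∈ A` is the limit of the slopes of `f ∘ φ` along the pairs
`(xₙ, yₙ)`, because the slope of `f ∘ φ` at `(xₙ, yₙ)` factors as the slope of `f` at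
`(φ xₙ, φ yₙ)` times the distortion `d(φ xₙ, φ yₙ) / d(xₙ, yₙ) → 1`; since `A` is norming,
`‖f‖ ≤ ‖f ∘ φ‖`.
-/

section LipNorm

variable {M N : Type*} [MetricSpace M] [MetricSpace N]

/-- The slopes of `f` are symmetric under swapping the points, so their supremum is `≥ 0`
(and `sSup` of an empty or unbounded set of reals is `0`). -/
theorem lipNorm_nonneg (f : M → ℝ) : 0 ≤ lipNorm f := by
  by_cases hbdd : BddAbove {r : ℝ | ∃ x y : M, x ≠ y ∧ r = (f x - f y) / dist x y}
  · rcases subsingleton_or_nontrivial M with hM | hM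
    · have hempty : {r : ℝ | ∃ x y : M, x ≠ y ∧ r = (f x - f y) / dist x y} = ∅ :=
        Set.eq_empty_of_forall_notMem fun _ ⟨x, y, hxy, _⟩ => hxy (Subsingleton.elim x y)
      rw [lipNorm, hempty, Real.sSup_empty]
    · obtain ⟨x, y, hxy⟩ := exists_pair_ne M
      have hxy' := le_csSup hbdd ⟨x, y, hxy, rfl⟩
      have hyx' := le_csSup hbdd ⟨y, x, hxy.symm, rfl⟩
      rw [dist_comm y x] at hyx'
      have hsum : (f x - f y) / dist x y + (f y - f x) / dist x y = 0 := by
        rw [← add_div, add_comm, sub_add_sub_cancel, sub_self, zero_div]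
      rw [lipNorm]
      linarith
  · rw [lipNorm, Real.sSup_of_not_bddAbove hbdd]

theorem LipschitzWith.div_dist_le_lipNorm {K : NNReal} {f : M → ℝ} (hf : LipschitzWith K f)
    (x y : M) : (f x - f y) / dist x y ≤ lipNorm f := by
  rcases eq_or_ne x y with rfl | hxy
  · simpa using lipNorm_nonneg f
  refine le_csSup ⟨K, ?_⟩ ⟨x, y, hxy, rfl⟩
  rintro _ ⟨x, y, hxy, rfl⟩
  rw [div_le_iff₀ (dist_pos.2 hxy)]
  exact (le_abs_self _).trans ((Real.dist_eq _ _).symm.trans_le (hf.dist_le_mul x y))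

theorem LipschitzWith.sub_le_lipNorm_mul_dist {K : NNReal} {f : M → ℝ}
    (hf : LipschitzWith K f) (x y : M) : f x - f y ≤ lipNorm f * dist x y := by
  rcases eq_or_ne x y with rfl | hxy
  · simp
  exact (div_le_iff₀ (dist_pos.2 hxy)).1 (hf.div_dist_le_lipNorm x y)

theorem lipNorm_le_of_forall_sub_le {f : M → ℝ} {c : ℝ} (hc : 0 ≤ c)
    (h : ∀ x y, f x - f y ≤ c * dist x y) : lipNorm f ≤ c := by
  refine Real.sSup_le ?_ hc
  rintro _ ⟨x, y, hxy, rfl⟩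
  exact (div_le_iff₀ (dist_pos.2 hxy)).2 (h x y)

theorem LipschitzWith.lipNorm_comp_le {K K' : NNReal} {f : M → ℝ} {φ : N → M}
    (hf : LipschitzWith K f) (hφ : LipschitzWith K' φ) :
    lipNorm (f ∘ φ) ≤ K' * lipNorm f :=
  lipNorm_le_of_forall_sub_le (mul_nonneg K'.2 (lipNorm_nonneg f)) fun x y =>
    calc f (φ x) - f (φ y) ≤ lipNorm f * dist (φ x) (φ y) := hf.sub_le_lipNorm_mul_dist _ _
      _ ≤ lipNorm f * (K' * dist x y) :=
        mul_le_mul_of_nonneg_left (hφ.dist_le_mul x y) (lipNorm_nonneg f)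
      _ = K' * lipNorm f * dist x y := by ring

theorem tendsto_div_dist {f : M → ℝ} (hf : Continuous f) {a b : M} (hab : a ≠ b)
    {u v : ℕ → M} (hu : Tendsto u atTop (𝓝 a)) (hv : Tendsto v atTop (𝓝 b)) :
    Tendsto (fun n => (f (u n) - f (v n)) / dist (u n) (v n)) atTop
      (𝓝 ((f a - f b) / dist a b)) :=
  (((hf.tendsto a).comp hu).sub ((hf.tendsto b).comp hv)).div (hu.dist hv) (dist_ne_zero.2 hab)

theorem div_dist_le_lipNorm_comp_of_tendsto {K : NNReal} {f : M → ℝ} {φ : N → M}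
    (hf : Continuous f) (hfφ : LipschitzWith K (f ∘ φ)) {a b : M} {x y : ℕ → N}
    (hne : ∀ n, φ (x n) ≠ φ (y n))
    (hx : Tendsto (fun n => φ (x n)) atTop (𝓝 a)) (hy : Tendsto (fun n => φ (y n)) atTop (𝓝 b))
    (hratio : Tendsto (fun n => dist (φ (x n)) (φ (y n)) / dist (x n) (y n)) atTop (𝓝 1)) :
    (f a - f b) / dist a b ≤ lipNorm (f ∘ φ) := by
  rcases eq_or_ne a b with rfl | hab
  · simpa using lipNorm_nonneg (f ∘ φ)
  have hfactor : ∀ n, (f (φ (x n)) - f (φ (y n))) / dist (φ (x n)) (φ (y n)) *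
      (dist (φ (x n)) (φ (y n)) / dist (x n) (y n)) =
      (f (φ (x n)) - f (φ (y n))) / dist (x n) (y n) := fun n =>
    div_mul_div_cancel₀ (dist_ne_zero.2 (hne n))
  have hlim := (tendsto_div_dist hf hab hx hy).mul hratio
  rw [mul_one] at hlim
  simp only [hfactor] at hlim
  exact le_of_tendsto' hlim fun n => hfφ.div_dist_le_lipNorm (x n) (y n)

end LipNorm

theorem stmt0_general {M N : Type*} [MetricSpace M] [MetricSpace N]
    (φ : N → M) (hφ : LipschitzWith 1 φ)
    (A : Set (M × M))
    (hnorming : ∀ f : M → ℝ, (∃ K : NNReal, LipschitzWith K f) →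
      lipNorm f = sSup {r : ℝ | ∃ p ∈ A, r = (f p.1 - f p.2) / dist p.1 p.2})
    (hseq : ∀ p ∈ A, ∃ x y : ℕ → N,
      (∀ n, φ (x n) ≠ φ (y n)) ∧
      Tendsto (fun n => φ (x n)) atTop (𝓝 p.1) ∧
      Tendsto (fun n => φ (y n)) atTop (𝓝 p.2) ∧
      Tendsto (fun n => dist (φ (x n)) (φ (y n)) / dist (x n) (y n)) atTop (𝓝 1)) :
    ∀ f : M → ℝ, (∃ K : NNReal, LipschitzWith K f) → lipNorm (f ∘ φ) = lipNorm f := by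
  rintro f ⟨K, hf⟩
  refine le_antisymm (by simpa using hf.lipNorm_comp_le hφ) ?_
  rw [hnorming f ⟨K, hf⟩]
  refine Real.sSup_le ?_ (lipNorm_nonneg _)
  rintro _ ⟨p, hp, rfl⟩
  obtain ⟨x, y, hne, hx, hy, hratio⟩ := hseq p hp
  exact div_dist_le_lipNorm_comp_of_tendsto hf.continuous (hf.comp hφ) hne hx hy hratio

/-- If `φ : N → M` is `1`-Lipschitz, `A ⊆ {(x,y) : x ≠ y}` is such that
the molecules over `A` are norming for Lipschitz functions over `M`, and for every
`(x,y) ∈ A` there are sequences `xₙ, yₙ` in `N` with `φ(xₙ) ≠ φ(yₙ)`, `φ(xₙ) → x`,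
`φ(yₙ) → y` and `d(φ(xₙ),φ(yₙ))/d(xₙ,yₙ) → 1`, then the composition operator
`C_φ : f ↦ f ∘ φ` is isometric. -/
theorem stmt0 {M N : Type*} [MetricSpace M] [MetricSpace N]
    (φ : N → M) (hφ : LipschitzWith 1 φ)
    (A : Set (M × M)) (hA : ∀ p ∈ A, p.1 ≠ p.2)
    (hnorming : ∀ f : M → ℝ, (∃ K : NNReal, LipschitzWith K f) →
      lipNorm f = sSup {r : ℝ | ∃ p ∈ A, r = (f p.1 - f p.2) / dist p.1 p.2})
    (hseq : ∀ p ∈ A, ∃ x y : ℕ → N,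
      (∀ n, φ (x n) ≠ φ (y n)) ∧
      Tendsto (fun n => φ (x n)) atTop (𝓝 p.1) ∧
      Tendsto (fun n => φ (y n)) atTop (𝓝 p.2) ∧
      Tendsto (fun n => dist (φ (x n)) (φ (y n)) / dist (x n) (y n)) atTop (𝓝 1)) :
    ∀ f : M → ℝ, (∃ K : NNReal, LipschitzWith K f) → lipNorm (f ∘ φ) = lipNorm f :=
  stmt0_general φ hφ A hnorming hseq
end

section
/- Let N be a metric space and let φ: N → [0,1] be a 1-Lipschitz function such that the composition operator C_φ is isometric, i.e. ‖f ∘ φ‖ = ‖f‖ for every Lipschitz function f: [0,1] → ℝ. Then for every x ∈ [0,1] there exist sequences (x_n), (y_n) in N with x_n ≠ y_n for every n, such that φ(x_n) → x, φ(y_n) → x, and |φ(x_n) − φ(y_n)|/d(x_n, y_n) → 1. -/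
open Filter Topology

lemma key_step {N : Type*} [MetricSpace N]
    (φ : N → Set.Icc (0:ℝ) 1) (hφ : LipschitzWith 1 φ)
    (hiso : ∀ f : Set.Icc (0:ℝ) 1 → ℝ, (∃ K : NNReal, LipschitzWith K f) →
      lipNorm (f ∘ φ) = lipNorm f)
    (x : Set.Icc (0:ℝ) 1) {ε : ℝ} (hε : 0 < ε) (hε2 : ε ≤ 1/2) :
    ∃ a b : N, a ≠ b ∧ |(φ a : ℝ) - (x : ℝ)| < ε ∧ |(φ b : ℝ) - (x : ℝ)| < 3*ε ∧
      1 - ε < |(φ a : ℝ) - (φ b : ℝ)| / dist a b ∧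
      |(φ a : ℝ) - (φ b : ℝ)| / dist a b ≤ 1 := by
  set f : Set.Icc (0:ℝ) 1 → ℝ := fun t => max 0 (ε - |(t:ℝ) - (x:ℝ)|) with hf
  -- f is 1-Lipschitz
  have flip : LipschitzWith 1 f := by
    apply LipschitzWith.of_dist_le_mul
    intro s t
    rw [Subtype.dist_eq, Real.dist_eq, Real.dist_eq, NNReal.coe_one, one_mul]
    have h1 : |f s - f t| ≤ |(ε - |(s:ℝ) - (x:ℝ)|) - (ε - |(t:ℝ) - (x:ℝ)|)| := by
      rw [hf]
      simp only [max_comm (0:ℝ)]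
      exact abs_max_sub_max_le_abs _ _ _
    calc |f s - f t| ≤ |(ε - |(s:ℝ) - (x:ℝ)|) - (ε - |(t:ℝ) - (x:ℝ)|)| := h1
      _ = |abs ((t:ℝ) - (x:ℝ)) - abs ((s:ℝ) - (x:ℝ))| := by congr 1; ring
      _ ≤ |((t:ℝ) - (x:ℝ)) - ((s:ℝ) - (x:ℝ))| := abs_abs_sub_abs_le_abs_sub _ _
      _ = |(s:ℝ) - (t:ℝ)| := by
          rw [show ((t:ℝ) - (x:ℝ)) - ((s:ℝ) - (x:ℝ)) = -((s:ℝ) - (t:ℝ)) by ring, abs_neg]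
  have hfa_nonneg : ∀ t, 0 ≤ f t := fun t => le_max_left _ _
  have hfa_le : ∀ t, f t ≤ ε := fun t =>
    max_le hε.le (by linarith [abs_nonneg ((t : ℝ) - (x:ℝ))])
  -- lipNorm f = 1
  have hbdd : ∀ r ∈ {r : ℝ | ∃ a b : Set.Icc (0:ℝ) 1, a ≠ b ∧ r = (f a - f b) / dist a b},
      r ≤ 1 := by
    rintro r ⟨a, b, hab, rfl⟩
    have hd : 0 < dist a b := dist_pos.2 hab
    have : f a - f b ≤ dist a b := by
      have := flip.dist_le_mul a b
      rw [NNReal.coe_one, one_mul, Real.dist_eq] at this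
      exact (le_abs_self _).trans this
    exact (div_le_one hd).2 this
  have hmem : (1:ℝ) ∈ {r : ℝ | ∃ a b : Set.Icc (0:ℝ) 1, a ≠ b ∧ r = (f a - f b) / dist a b} := by
    have e1 : f x = ε := by
      simp [hf, abs_of_nonneg hε.le, max_eq_right hε.le]
    rcases le_or_gt (x:ℝ) (1/2) with hx | hx
    · have hb : (x:ℝ) + ε ∈ Set.Icc (0:ℝ) 1 := ⟨by linarith [x.2.1], by linarith⟩
      refine ⟨x, ⟨(x:ℝ) + ε, hb⟩, ?_, ?_⟩
      · intro h
        have := congrArg Subtype.val h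
        simp only at this
        linarith
      · have e2 : f ⟨(x:ℝ) + ε, hb⟩ = 0 := by
          simp [hf, abs_of_nonneg hε.le]
        rw [e1, e2, Subtype.dist_eq, Real.dist_eq]
        simp [abs_of_nonneg hε.le, hε.ne']
    · have hb : (x:ℝ) - ε ∈ Set.Icc (0:ℝ) 1 := ⟨by linarith, by linarith [x.2.2]⟩
      refine ⟨x, ⟨(x:ℝ) - ε, hb⟩, ?_, ?_⟩
      · intro h
        have := congrArg Subtype.val h
        simp only at this
        linarith
      · have e2 : f ⟨(x:ℝ) - ε, hb⟩ = 0 := by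
          simp [hf, abs_of_nonneg hε.le]
        rw [e1, e2, Subtype.dist_eq, Real.dist_eq]
        simp [abs_of_nonneg hε.le, hε.ne']
  have hlip1 : lipNorm f = 1 := by
    rw [lipNorm]
    exact le_antisymm (csSup_le ⟨1, hmem⟩ hbdd) (le_csSup ⟨1, hbdd⟩ hmem)
  have hcomp : lipNorm (f ∘ φ) = 1 := by
    rw [hiso f ⟨1, flip⟩, hlip1]
  -- the Lipschitz composite
  have glip : LipschitzWith 1 (f ∘ φ) := by
    have := flip.comp hφ
    simpa using this
  set S' : Set ℝ := {r : ℝ | ∃ a b : N, a ≠ b ∧ r = ((f ∘ φ) a - (f ∘ φ) b) / dist a b} with hS'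
  have hbdd' : ∀ r ∈ S', r ≤ 1 := by
    rintro r ⟨a, b, hab, rfl⟩
    have hd : 0 < dist a b := dist_pos.2 hab
    have : (f ∘ φ) a - (f ∘ φ) b ≤ dist a b := by
      have := glip.dist_le_mul a b
      rw [NNReal.coe_one, one_mul, Real.dist_eq] at this
      exact (le_abs_self _).trans this
    exact (div_le_one hd).2 this
  have hS'sup : sSup S' = 1 := hcomp
  have hne' : S'.Nonempty := by
    by_contra h
    rw [Set.not_nonempty_iff_eq_empty] at h
    rw [h, Real.sSup_empty] at hS'sup
    norm_num at hS'sup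
  obtain ⟨r, hrS, hr⟩ := exists_lt_of_lt_csSup hne' (by rw [hS'sup]; linarith : (1:ℝ) - ε < sSup S')
  obtain ⟨a, b, hab, rfl⟩ := hrS
  refine ⟨a, b, hab, ?_⟩
  have hd : 0 < dist a b := dist_pos.2 hab
  have h1 : (1 - ε) * dist a b < f (φ a) - f (φ b) := (lt_div_iff₀ hd).1 hr
  have hεd : 0 < (1 - ε) * dist a b := by
    apply mul_pos (by linarith) hd
  have hdlt : dist a b < 2 * ε := by
    have := hfa_le (φ a)
    have := hfa_nonneg (φ b)
    nlinarith
  have hfapos : 0 < f (φ a) := by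
    have := hfa_nonneg (φ b); linarith
  have hA : |(φ a : ℝ) - (x:ℝ)| < ε := by
    by_contra h
    push_neg at h
    have : f (φ a) ≤ 0 := max_le le_rfl (by linarith)
    linarith
  have hphidist : |(φ a : ℝ) - (φ b : ℝ)| ≤ dist a b := by
    have := hφ.dist_le_mul a b
    rw [NNReal.coe_one, one_mul, Subtype.dist_eq, Real.dist_eq] at this
    exact this
  have hB : |(φ b : ℝ) - (x:ℝ)| < 3 * ε := by
    have habs : |(φ b : ℝ) - (x:ℝ)| ≤ |(φ b : ℝ) - (φ a : ℝ)| + |(φ a : ℝ) - (x:ℝ)| :=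
      abs_sub_le _ _ _
    have hc : |(φ b : ℝ) - (φ a : ℝ)| = |(φ a : ℝ) - (φ b : ℝ)| := abs_sub_comm _ _
    rw [hc] at habs
    linarith
  have hfdiff : f (φ a) - f (φ b) ≤ |(φ a : ℝ) - (φ b : ℝ)| := by
    have := flip.dist_le_mul (φ a) (φ b)
    rw [NNReal.coe_one, one_mul, Real.dist_eq, Subtype.dist_eq, Real.dist_eq] at this
    exact (le_abs_self _).trans this
  refine ⟨hA, hB, ?_, (div_le_one hd).2 hphidist⟩
  calc 1 - ε < (f (φ a) - f (φ b)) / dist a b := hr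
    _ ≤ |(φ a : ℝ) - (φ b : ℝ)| / dist a b := by gcongr

/-- If `φ : N → [0,1]` is `1`-Lipschitz and the composition operator
`C_φ : f ↦ f ∘ φ` is isometric, then for every `x ∈ [0,1]` there are sequences
`xₙ ≠ yₙ` in `N` with `φ(xₙ) → x`, `φ(yₙ) → x` and `|φ(xₙ) - φ(yₙ)|/d(xₙ,yₙ) → 1`. -/
theorem stmt1 {N : Type*} [MetricSpace N]
    (φ : N → Set.Icc (0:ℝ) 1) (hφ : LipschitzWith 1 φ)
    (hiso : ∀ f : Set.Icc (0:ℝ) 1 → ℝ, (∃ K : NNReal, LipschitzWith K f) →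
      lipNorm (f ∘ φ) = lipNorm f) :
    ∀ x : Set.Icc (0:ℝ) 1, ∃ u v : ℕ → N,
      (∀ n, u n ≠ v n) ∧
      Tendsto (fun n => φ (u n)) atTop (𝓝 x) ∧
      Tendsto (fun n => φ (v n)) atTop (𝓝 x) ∧
      Tendsto (fun n => |(φ (u n) : ℝ) - (φ (v n) : ℝ)| / dist (u n) (v n))
        atTop (𝓝 1) := by
  intro x
  set ε : ℕ → ℝ := fun n => 1 / ((n : ℝ) + 2) with hεdef
  have hεpos : ∀ n, 0 < ε n := fun n => by positivity
  have hεhalf : ∀ n, ε n ≤ 1/2 := by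
    intro n
    rw [hεdef]
    rw [div_le_div_iff₀ (by positivity) (by norm_num)]
    push_cast
    linarith [Nat.cast_nonneg (α := ℝ) n]
  have hε0 : Tendsto ε atTop (𝓝 0) := by
    have h1 : Tendsto (fun n : ℕ => 1 / ((n:ℝ) + 1)) atTop (𝓝 0) :=
      tendsto_one_div_add_atTop_nhds_zero_nat
    apply squeeze_zero (fun n => (hεpos n).le) _ h1
    intro n
    rw [hεdef]
    apply div_le_div_of_nonneg_left (by norm_num) (by positivity)
    linarith
  have hmain : ∀ n : ℕ, ∃ a b : N, a ≠ b ∧ |(φ a : ℝ) - (x : ℝ)| < ε n ∧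
      |(φ b : ℝ) - (x : ℝ)| < 3 * ε n ∧
      1 - ε n < |(φ a : ℝ) - (φ b : ℝ)| / dist a b ∧
      |(φ a : ℝ) - (φ b : ℝ)| / dist a b ≤ 1 :=
    fun n => key_step φ hφ hiso x (hεpos n) (hεhalf n)
  choose u v hne hu hv hlow hhigh using hmain
  refine ⟨u, v, hne, ?_, ?_, ?_⟩
  · rw [tendsto_iff_dist_tendsto_zero]
    apply squeeze_zero (fun n => dist_nonneg) _ hε0
    intro n
    rw [Subtype.dist_eq, Real.dist_eq]
    exact (hu n).le
  · rw [tendsto_iff_dist_tendsto_zero]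
    have h3 : Tendsto (fun n => 3 * ε n) atTop (𝓝 (3 * 0)) := hε0.const_mul 3
    rw [mul_zero] at h3
    apply squeeze_zero (fun n => dist_nonneg) _ h3
    intro n
    rw [Subtype.dist_eq, Real.dist_eq]
    exact (hv n).le
  · have hlo : Tendsto (fun n => 1 - ε n) atTop (𝓝 (1 - 0)) :=
      (tendsto_const_nhds : Tendsto (fun _ : ℕ => (1:ℝ)) atTop (𝓝 1)).sub hε0
    rw [sub_zero] at hlo
    exact tendsto_of_tendsto_of_tendsto_of_le_of_le hlo tendsto_const_nhds
      (fun n => (hlow n).le) (fun n => hhigh n)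
end

section
/- Let M be a geodesic metric space, N a metric space, and φ: N → M a Lipschitz map with least Lipschitz constant 1 such that the composition operator C_φ is isometric, i.e. ‖f ∘ φ‖ = ‖f‖ for every Lipschitz f: M → ℝ. Then for every pair of distinct points x, y ∈ M, every isometric embedding α: [0, d(x,y)] → M with α(0) = x and α(d(x,y)) = y, every inverse projection P of α, and every t ∈ [0, d(x,y)], there exist sequences (x_n), (y_n) in N with x_n ≠ y_n for every n, such that P(φ(x_n)) → t, P(φ(y_n)) → t, and (P(φ(x_n)) − P(φ(y_n)))/d(x_n, y_n) → 1. -/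
open Filter Topology

/-- A metric space is geodesic if any two points are joined by an isometric embedding of
`[0, d(x,y)]`. -/
def IsGeodesicSpace (M : Type*) [MetricSpace M] : Prop :=
  ∀ x y : M, ∃ α : Set.Icc (0:ℝ) (dist x y) → M, Isometry α ∧
    α ⟨0, Set.left_mem_Icc.mpr dist_nonneg⟩ = x ∧
    α ⟨dist x y, Set.right_mem_Icc.mpr dist_nonneg⟩ = y

lemma clamp_abs (A B a b : ℝ) :
    |min (max a A) B - min (max b A) B| ≤ |a - b| := by
  have h1 : |max a A - max b A| ≤ |a - b| := by
    have := abs_max_sub_max_le_max a A b A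
    simpa using this
  have h2 := abs_min_sub_min_le_max (max a A) B (max b A) B
  simp only [sub_self, abs_zero] at h2
  calc |min (max a A) B - min (max b A) B| ≤ max |max a A - max b A| 0 := h2
    _ ≤ |a - b| := max_le h1 (abs_nonneg _)

set_option maxHeartbeats 1000000 in
lemma key {M N : Type*} [MetricSpace M] [MetricSpace N]
    (φ : N → M) (hφ : LipschitzWith 1 φ)
    (hiso : ∀ f : M → ℝ, (∃ K : NNReal, LipschitzWith K f) →
      lipNorm (f ∘ φ) = lipNorm f)
    (x y : M) (hxy : x ≠ y)
    (α : Set.Icc (0:ℝ) (dist x y) → M) (hα : Isometry α)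
    (P : M → Set.Icc (0:ℝ) (dist x y)) (hP : LipschitzWith 1 P)
    (hPα : ∀ s, P (α s) = s)
    (t : Set.Icc (0:ℝ) (dist x y)) (δ η : ℝ) (hδ : 0 < δ) (hη0 : 0 < η) (hη : η ≤ 1/4) :
    ∃ u v : N, u ≠ v ∧ |((P (φ u) : ℝ)) - t| ≤ 5*δ ∧ |((P (φ v) : ℝ)) - t| ≤ 5*δ ∧
      1 - η < (((P (φ u) : ℝ)) - ((P (φ v) : ℝ))) / dist u v ∧
      (((P (φ u) : ℝ)) - ((P (φ v) : ℝ))) / dist u v ≤ 1 := by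
  have hL : 0 < dist x y := dist_pos.mpr hxy
  have ht0 : 0 ≤ (t:ℝ) := t.2.1
  have htL : (t:ℝ) ≤ dist x y := t.2.2
  set A : ℝ := max 0 ((t:ℝ) - δ) with hAdef
  set B : ℝ := min (dist x y) ((t:ℝ) + δ) with hBdef
  have hA0 : 0 ≤ A := le_max_left _ _
  have hBL : B ≤ dist x y := min_le_left _ _
  have hAt : A ≥ (t:ℝ) - δ := le_max_right _ _
  have hBt : B ≤ (t:ℝ) + δ := min_le_right _ _
  have hAB : A < B := by
    rcases le_or_gt 0 ((t:ℝ) - δ) with h | h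
    · have : A = (t:ℝ) - δ := max_eq_right h
      rw [this]
      exact lt_min (by linarith) (by linarith)
    · have hA' : A = 0 := max_eq_left h.le
      rw [hA']
      exact lt_min hL (by linarith)
  -- the tent function
  set h : ℝ → ℝ := fun s => s/2 + (min (max s A) B)/2 with hhdef
  have habs : ∀ a b : ℝ, |h a - h b| ≤ |a - b| := by
    intro a b
    have hc := clamp_abs A B a b
    have : h a - h b = (a - b)/2 + (min (max a A) B - min (max b A) B)/2 := by
      simp only [hhdef]; ring
    rw [this]
    calc |(a - b)/2 + (min (max a A) B - min (max b A) B)/2|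
        ≤ |(a-b)/2| + |(min (max a A) B - min (max b A) B)/2| := abs_add_le _ _
      _ = |a-b|/2 + |min (max a A) B - min (max b A) B|/2 := by rw [abs_div, abs_div]; norm_num
      _ ≤ |a-b|/2 + |a-b|/2 := by linarith
      _ = |a-b| := by ring
  set f : M → ℝ := fun m => h ((P m : ℝ)) with hfdef
  have hπ : ∀ m m' : M, |((P m : ℝ)) - ((P m' : ℝ))| ≤ dist m m' := by
    intro m m'
    have := hP.dist_le_mul m m'
    rw [Subtype.dist_eq, Real.dist_eq] at this
    simpa using this
  have hfLip : LipschitzWith 1 f := by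
    apply LipschitzWith.of_dist_le_mul
    intro m m'
    rw [Real.dist_eq]
    simp only [NNReal.coe_one, one_mul]
    calc |f m - f m'| ≤ |((P m : ℝ)) - ((P m' : ℝ))| := habs _ _
      _ ≤ dist m m' := hπ m m'
  have hub : ∀ r ∈ {r : ℝ | ∃ p q : M, p ≠ q ∧ r = (f p - f q) / dist p q}, r ≤ 1 := by
    rintro r ⟨p, q, hpq, rfl⟩
    have hd : 0 < dist p q := dist_pos.mpr hpq
    rw [div_le_one hd]
    calc f p - f q ≤ |f p - f q| := le_abs_self _
      _ ≤ |((P p : ℝ)) - ((P q : ℝ))| := habs _ _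
      _ ≤ dist p q := hπ p q
  have hAmem : A ∈ Set.Icc (0:ℝ) (dist x y) := ⟨hA0, le_trans hAB.le hBL⟩
  have hBmem : B ∈ Set.Icc (0:ℝ) (dist x y) := ⟨le_trans hA0 hAB.le, hBL⟩
  have hone : (1:ℝ) ∈ {r : ℝ | ∃ p q : M, p ≠ q ∧ r = (f p - f q) / dist p q} := by
    refine ⟨α ⟨B, hBmem⟩, α ⟨A, hAmem⟩, ?_, ?_⟩
    · intro hc
      have := hα.injective hc
      have : B = A := congrArg Subtype.val this
      linarith
    · have hfB : f (α ⟨B, hBmem⟩) = B := by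
        simp only [hfdef, hPα]
        have hmax : max B A = B := max_eq_left hAB.le
        simp only [hhdef, hmax, min_self]
        ring
      have hfA : f (α ⟨A, hAmem⟩) = A := by
        simp only [hfdef, hPα]
        have hmax : max A A = A := max_self A
        have hmin : min A B = A := min_eq_left hAB.le
        simp only [hhdef, hmax, hmin]
        ring
      have hdist : dist (α ⟨B, hBmem⟩) (α ⟨A, hAmem⟩) = B - A := by
        rw [hα.dist_eq, Subtype.dist_eq, Real.dist_eq, abs_of_pos (by linarith : (0:ℝ) < B - A)]
      rw [hfB, hfA, hdist, div_self (by linarith : B - A ≠ 0)]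
  have hlip1 : lipNorm f = 1 := by
    unfold lipNorm
    exact le_antisymm (csSup_le ⟨1, hone⟩ hub) (le_csSup ⟨1, hub⟩ hone)
  have hcomp : lipNorm (f ∘ φ) = 1 := by rw [hiso f ⟨1, hfLip⟩, hlip1]
  set S : Set ℝ := {r : ℝ | ∃ u v : N, u ≠ v ∧ r = ((f ∘ φ) u - (f ∘ φ) v) / dist u v} with hSdef
  have hSsup : sSup S = 1 := hcomp
  have hSne : S.Nonempty := by
    rcases S.eq_empty_or_nonempty with hS | hS
    · exfalso; rw [hS, Real.sSup_empty] at hSsup; norm_num at hSsup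
    · exact hS
  obtain ⟨r, ⟨u, v, huv, hr⟩, hrlt⟩ := exists_lt_of_lt_csSup hSne (by rw [hSsup]; linarith : 1 - η < sSup S)
  refine ⟨u, v, huv, ?_⟩
  set a : ℝ := ((P (φ u) : ℝ)) with hadef
  set b : ℝ := ((P (φ v) : ℝ)) with hbdef
  set D : ℝ := dist u v with hDdef
  have hD : 0 < D := dist_pos.mpr huv
  have hrval : r = (h a - h b) / D := hr
  have hnum : (1 - η) * D < h a - h b := by
    rw [hrval] at hrlt
    exact (lt_div_iff₀ hD).mp hrlt
  have habD : |a - b| ≤ D := by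
    calc |a - b| ≤ dist (φ u) (φ v) := hπ _ _
      _ ≤ D := by simpa using hφ.dist_le_mul u v
  set ca : ℝ := min (max a A) B with hcadef
  set cb : ℝ := min (max b A) B with hcbdef
  have hhab : h a - h b = (a - b)/2 + (ca - cb)/2 := by simp only [hhdef]; ring
  have hpos : 0 < h a - h b := lt_of_le_of_lt (mul_nonneg (by linarith) hD.le) hnum
  have hba : b < a := by
    by_contra hc
    push_neg at hc
    have hcc : ca ≤ cb := min_le_min (max_le_max hc le_rfl) le_rfl
    rw [hhab] at hpos
    linarith
  have hhle : h a - h b ≤ a - b := by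
    calc h a - h b ≤ |h a - h b| := le_abs_self _
      _ ≤ |a - b| := habs a b
      _ = a - b := abs_of_pos (by linarith)
  have habD' : a - b ≤ D := le_trans (le_abs_self _) habD
  have hnum2 : (1 - η) * (a - b) ≤ (1 - η) * D :=
    mul_le_mul_of_nonneg_left habD' (by linarith)
  have hx4 : η*(a-b) ≤ (1/4)*(a-b) := mul_le_mul_of_nonneg_right hη (by linarith)
  have hexp : (1-η)*(a-b) = (a-b) - η*(a-b) := by ring
  have hcab : 0 < ca - cb := by
    rw [hhab] at hnum
    linarith
  have hcaB : ca ≤ B := min_le_right _ _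
  have hcbA : A ≤ cb := le_min (le_max_right _ _) hAB.le
  have hcab2 : ca - cb ≤ 2*δ := by
    have : ca - cb ≤ B - A := by linarith
    linarith
  have hab4 : a - b < 4*δ := by
    rw [hhab] at hnum
    linarith
  have haA : A < a := by
    have h1 : A < ca := by linarith
    have h2 : ca ≤ max a A := min_le_left _ _
    have h3 : A < max a A := lt_of_lt_of_le h1 h2
    rcases lt_max_iff.mp h3 with h | h
    · exact h
    · exact absurd h (lt_irrefl A)
  have hbB : b < B := by
    have h1 : cb < B := by linarith
    have h2 : max b A < B ∨ B < B := min_lt_iff.mp h1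
    rcases h2 with h | h
    · exact lt_of_le_of_lt (le_max_left _ _) h
    · exact absurd h (lt_irrefl B)
  refine ⟨?_, ?_, ?_, ?_⟩
  · rw [abs_le]
    constructor
    · linarith
    · linarith
  · rw [abs_le]
    constructor
    · linarith
    · linarith
  · rw [lt_div_iff₀ hD]
    linarith
  · rw [div_le_one hD]
    linarith

/-- Let `M` be geodesic, `φ : N → M` a Lipschitz map with least Lipschitz
constant `1` such that `C_φ` is isometric. Then for all distinct `x, y ∈ M`, every
isometric embedding `α : [0,d(x,y)] → M` joining `x` to `y`, every inverse projection `P`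
of `α`, and every `t ∈ [0,d(x,y)]`, there are sequences `xₙ ≠ yₙ` in `N` with
`P(φ(xₙ)) → t`, `P(φ(yₙ)) → t` and `(P(φ(xₙ)) - P(φ(yₙ)))/d(xₙ,yₙ) → 1`. -/
theorem stmt9 {M N : Type*} [MetricSpace M] [MetricSpace N]
    (hM : IsGeodesicSpace M)
    (φ : N → M) (hφ : LipschitzWith 1 φ)
    (hφleast : ∀ K : NNReal, LipschitzWith K φ → 1 ≤ K)
    (hiso : ∀ f : M → ℝ, (∃ K : NNReal, LipschitzWith K f) →
      lipNorm (f ∘ φ) = lipNorm f) :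
    ∀ x y : M, x ≠ y →
      ∀ α : Set.Icc (0:ℝ) (dist x y) → M, Isometry α →
        α ⟨0, Set.left_mem_Icc.mpr dist_nonneg⟩ = x →
        α ⟨dist x y, Set.right_mem_Icc.mpr dist_nonneg⟩ = y →
      ∀ P : M → Set.Icc (0:ℝ) (dist x y), LipschitzWith 1 P → (∀ s, P (α s) = s) →
      ∀ t : Set.Icc (0:ℝ) (dist x y),
        ∃ u v : ℕ → N, (∀ n, u n ≠ v n) ∧
          Tendsto (fun n => P (φ (u n))) atTop (𝓝 t) ∧
          Tendsto (fun n => P (φ (v n))) atTop (𝓝 t) ∧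
          Tendsto (fun n => ((P (φ (u n)) : ℝ) - (P (φ (v n)) : ℝ)) / dist (u n) (v n))
            atTop (𝓝 1) := by
  intro x y hxy α hα hα0 hα1 P hP hPα t
  set e : ℕ → ℝ := fun n => (1/4) * (1/((n:ℝ)+1)) with hedef
  have he_pos : ∀ n, 0 < e n := by intro n; positivity
  have he_le : ∀ n, e n ≤ 1/4 := by
    intro n
    have h1 : (1:ℝ)/((n:ℝ)+1) ≤ 1 := by
      rw [div_le_one (by positivity)]
      linarith [Nat.cast_nonneg (α := ℝ) n]
    simp only [hedef]
    nlinarith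
  have he_tendsto : Tendsto e atTop (𝓝 0) := by
    have h := tendsto_one_div_add_atTop_nhds_zero_nat.const_mul ((1:ℝ)/4)
    simpa [hedef] using h
  have H : ∀ n : ℕ, ∃ u v : N, u ≠ v ∧ |((P (φ u) : ℝ)) - t| ≤ 5*(e n) ∧
      |((P (φ v) : ℝ)) - t| ≤ 5*(e n) ∧
      1 - e n < (((P (φ u) : ℝ)) - ((P (φ v) : ℝ))) / dist u v ∧
      (((P (φ u) : ℝ)) - ((P (φ v) : ℝ))) / dist u v ≤ 1 :=
    fun n => key φ hφ hiso x y hxy α hα P hP hPα t (e n) (e n)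
      (he_pos n) (he_pos n) (he_le n)
  choose u v huv h1 h2 h3 h4 using H
  have hg : Tendsto (fun n => 5 * e n) atTop (𝓝 0) := by
    have hg' := he_tendsto.const_mul (5:ℝ)
    rwa [mul_zero] at hg'
  refine ⟨u, v, huv, ?_, ?_, ?_⟩
  · rw [tendsto_subtype_rng]
    have h0 : Tendsto (fun n => ((P (φ (u n)) : ℝ)) - (t:ℝ)) atTop (𝓝 0) :=
      squeeze_zero_norm (fun n => by simpa [Real.norm_eq_abs] using h1 n) hg
    simpa using h0.add_const (t:ℝ)
  · rw [tendsto_subtype_rng]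
    have h0 : Tendsto (fun n => ((P (φ (v n)) : ℝ)) - (t:ℝ)) atTop (𝓝 0) :=
      squeeze_zero_norm (fun n => by simpa [Real.norm_eq_abs] using h2 n) hg
    simpa using h0.add_const (t:ℝ)
  · have h0 : Tendsto (fun n =>
        (((P (φ (u n)) : ℝ)) - ((P (φ (v n)) : ℝ))) / dist (u n) (v n) - 1) atTop (𝓝 0) := by
      apply squeeze_zero_norm (a := e) _ he_tendsto
      intro n
      rw [Real.norm_eq_abs, abs_le]
      constructor
      · linarith [h3 n]
      · linarith [h4 n, he_pos n]
    simpa using h0.add_const 1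
end

section
/- Fix x ∈ [0,1] and define g: [0,1] → ℝ by g(t) := ∫_x^t (1 − |x − s|) ds. Then: (a) g is 1-Lipschitz and its least Lipschitz constant equals 1; and (b) whenever (u_n), (v_n) are sequences in [0,1] with u_n ≠ v_n for all n and (g(u_n) − g(v_n))/|u_n − v_n| → 1, it follows that u_n → x and v_n → x. -/
open Filter Topology

/-- Auxiliary function: `phi a = a - a * |a| / 2`, so that `g t = phi (t - x)`. -/
noncomputable def phi (a : ℝ) : ℝ := a - a * |a| / 2

lemma Dfacts (a b : ℝ) (h : b < a) :
    0 ≤ a * |a| - b * |b| ∧ |a| * (a - b) ≤ 2 * (a * |a| - b * |b|) ∧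
      |b| * (a - b) ≤ 2 * (a * |a| - b * |b|) ∧
      a * |a| - b * |b| ≤ (|a| + |b|) * (a - b) := by
  rcases abs_cases a with ⟨ha, ha'⟩ | ⟨ha, ha'⟩ <;>
    rcases abs_cases b with ⟨hb, hb'⟩ | ⟨hb, hb'⟩ <;>
      rw [ha, hb] <;>
      exact ⟨by nlinarith [sq_nonneg (a + b), sq_nonneg (a - b)],
        by nlinarith [sq_nonneg (a + b), sq_nonneg (a - b)],
        by nlinarith [sq_nonneg (a + b), sq_nonneg (a - b)],
        by nlinarith [sq_nonneg (a + b), sq_nonneg (a - b)]⟩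

lemma phi_lip {a b : ℝ} (ha : |a| ≤ 1) (hb : |b| ≤ 1) : |phi a - phi b| ≤ |a - b| := by
  rcases lt_trichotomy b a with h | h | h
  · obtain ⟨h1, h2, h3, h4⟩ := Dfacts a b h
    rw [abs_of_pos (by linarith : (0:ℝ) < a - b), abs_le]
    unfold phi
    constructor <;> nlinarith [abs_nonneg a, abs_nonneg b]
  · simp [h]
  · obtain ⟨h1, h2, h3, h4⟩ := Dfacts b a h
    rw [abs_of_neg (by linarith : a - b < 0), abs_le]
    unfold phi
    constructor <;> nlinarith [abs_nonneg a, abs_nonneg b]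

lemma phi_quot_le {a b : ℝ} (ha : |a| ≤ 1) (hb : |b| ≤ 1) (hne : a ≠ b) :
    (phi a - phi b) / |a - b| ≤ 1 - |a| / 4 ∧
      (phi a - phi b) / |a - b| ≤ 1 - |b| / 4 := by
  rcases hne.lt_or_gt with h | h
  · -- a < b : numerator is ≤ 0
    obtain ⟨h1, h2, h3, h4⟩ := Dfacts b a h
    have hba : (0:ℝ) < b - a := by linarith
    have hab2 : |a| + |b| ≤ 2 := by linarith
    have h5 : (|b| + |a|) * (b - a) ≤ 2 * (b - a) := by nlinarith
    have hnum : phi a - phi b ≤ 0 := by unfold phi; nlinarith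
    have hq : (phi a - phi b) / |a - b| ≤ 0 :=
      div_nonpos_of_nonpos_of_nonneg hnum (abs_nonneg _)
    constructor <;> linarith
  · -- b < a
    obtain ⟨h1, h2, h3, h4⟩ := Dfacts a b h
    have hab : (0:ℝ) < a - b := by linarith
    rw [abs_of_pos hab]
    constructor <;> rw [div_le_iff₀ hab] <;> unfold phi <;> nlinarith

lemma phi_quot_ge {a b : ℝ} (h : b < a) :
    1 - (|a| + |b|) / 2 ≤ (phi a - phi b) / |a - b| := by
  obtain ⟨h1, h2, h3, h4⟩ := Dfacts a b h
  have hab : (0:ℝ) < a - b := by linarith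
  rw [abs_of_pos hab, le_div_iff₀ hab]
  unfold phi
  nlinarith

lemma integral_phi (x t : ℝ) : (∫ s in x..t, (1 - |x - s|)) = phi (t - x) := by
  rcases le_total x t with h | h
  · have h1 : (∫ s in x..t, (1 - |x - s|)) = ∫ s in x..t, ((1 + x) - s) := by
      apply intervalIntegral.integral_congr
      intro s hs
      rw [Set.uIcc_of_le h] at hs
      dsimp only
      rw [abs_of_nonpos (by linarith [hs.1] : x - s ≤ 0)]
      ring
    rw [h1, intervalIntegral.integral_sub intervalIntegrable_const
      intervalIntegral.intervalIntegrable_id, intervalIntegral.integral_const,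
      integral_id, phi,
      abs_of_nonneg (by linarith : (0:ℝ) ≤ t - x), smul_eq_mul]
    ring
  · have h1 : (∫ s in x..t, (1 - |x - s|)) = ∫ s in x..t, ((1 - x) + s) := by
      apply intervalIntegral.integral_congr
      intro s hs
      rw [Set.uIcc_of_ge h] at hs
      dsimp only
      rw [abs_of_nonneg (by linarith [hs.2] : (0:ℝ) ≤ x - s)]
      ring
    rw [h1, intervalIntegral.integral_add intervalIntegrable_const
      intervalIntegral.intervalIntegrable_id, intervalIntegral.integral_const,
      integral_id, phi,
      abs_of_nonpos (by linarith : t - x ≤ 0), smul_eq_mul]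
    ring

/-- Fix `x ∈ [0,1]` and let `g(t) = ∫_x^t (1 - |x - s|) ds` (signed
integral). Then (a) `g` is `1`-Lipschitz with least Lipschitz constant `1`, and (b) if
`uₙ ≠ vₙ` are sequences in `[0,1]` with `(g(uₙ) - g(vₙ))/|uₙ - vₙ| → 1`, then `uₙ → x`
and `vₙ → x`. -/
theorem stmt12 (x : Set.Icc (0:ℝ) 1) (g : Set.Icc (0:ℝ) 1 → ℝ)
    (hg : ∀ t : Set.Icc (0:ℝ) 1,
      g t = ∫ s in (x : ℝ)..(t : ℝ), (1 - |(x : ℝ) - s|)) :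
    (LipschitzWith 1 g ∧ lipNorm g = 1) ∧
    ∀ u v : ℕ → Set.Icc (0:ℝ) 1, (∀ n, u n ≠ v n) →
      Tendsto (fun n => (g (u n) - g (v n)) / |((u n : ℝ)) - ((v n : ℝ))|)
        atTop (𝓝 1) →
      Tendsto u atTop (𝓝 x) ∧ Tendsto v atTop (𝓝 x) := by
  have hgphi : ∀ t : Set.Icc (0:ℝ) 1, g t = phi ((t : ℝ) - x) := fun t => by
    rw [hg t, integral_phi]
  have habs : ∀ t : Set.Icc (0:ℝ) 1, |(t : ℝ) - x| ≤ 1 := fun t => by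
    have ht := t.2
    have hx := x.2
    rw [Set.mem_Icc] at ht hx
    rw [abs_le]
    constructor <;> linarith [ht.1, ht.2, hx.1, hx.2]
  -- Lipschitz
  have hlip : LipschitzWith 1 g := by
    apply LipschitzWith.of_dist_le_mul
    intro u v
    rw [Real.dist_eq, Subtype.dist_eq, Real.dist_eq, hgphi, hgphi, NNReal.coe_one, one_mul]
    have h := phi_lip (habs u) (habs v)
    have e : (u : ℝ) - x - ((v : ℝ) - x) = (u : ℝ) - v := by ring
    rwa [e] at h
  -- difference-quotient bound
  have hQ : ∀ u v : Set.Icc (0:ℝ) 1, u ≠ v →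
      (g u - g v) / |(u : ℝ) - v| ≤ 1 - |(u : ℝ) - x| / 4 ∧
      (g u - g v) / |(u : ℝ) - v| ≤ 1 - |(v : ℝ) - x| / 4 := by
    intro u v huv
    have hne : (u : ℝ) - x ≠ (v : ℝ) - x := by
      intro h
      exact huv (Subtype.coe_injective (by linarith))
    have h := phi_quot_le (habs u) (habs v) hne
    rw [hgphi, hgphi]
    have e : ((u : ℝ) - x) - ((v : ℝ) - x) = (u : ℝ) - v := by ring
    rwa [e] at h
  -- elements of the sup set are ≤ 1
  have hub : ∀ r ∈ {r : ℝ | ∃ p q : Set.Icc (0:ℝ) 1, p ≠ q ∧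
      r = (g p - g q) / dist p q}, r ≤ 1 := by
    rintro r ⟨p, q, hpq, rfl⟩
    have hd : 0 < dist p q := dist_pos.2 hpq
    rw [div_le_one hd]
    calc g p - g q ≤ |g p - g q| := le_abs_self _
      _ = dist (g p) (g q) := (Real.dist_eq _ _).symm
      _ ≤ 1 * dist p q := by simpa using hlip.dist_le_mul p q
      _ = dist p q := one_mul _
  have ha2 : lipNorm g = 1 := by
    unfold lipNorm
    apply le_antisymm
    · exact Real.sSup_le hub zero_le_one
    · apply le_of_forall_pos_le_add
      intro ε hε
      have hxm := x.2
      rw [Set.mem_Icc] at hxm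
      set δ : ℝ := min ε (1/2) with hδdef
      have hδpos : 0 < δ := lt_min hε (by norm_num)
      have hδle : δ ≤ 1/2 := min_le_right _ _
      have hδε : δ ≤ ε := min_le_left _ _
      -- pick two points at distance δ near x
      obtain ⟨p, q, hqp⟩ : ∃ p q : Set.Icc (0:ℝ) 1,
          (q : ℝ) < p ∧ |(p : ℝ) - x| + |(q : ℝ) - x| ≤ δ := by
        rcases le_total (x : ℝ) (1/2) with hx2 | hx2
        · have hmem1 : (x : ℝ) + δ ∈ Set.Icc (0:ℝ) 1 :=
            Set.mem_Icc.2 ⟨by linarith [hxm.1], by linarith⟩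
          refine ⟨⟨(x : ℝ) + δ, hmem1⟩, x, ?_, ?_⟩
          · show (x : ℝ) < (x : ℝ) + δ
            linarith
          · show |(x : ℝ) + δ - x| + |(x : ℝ) - x| ≤ δ
            rw [show (x : ℝ) + δ - x = δ by ring, sub_self, abs_zero,
              abs_of_pos hδpos]
            linarith
        · have hmem1 : (x : ℝ) - δ ∈ Set.Icc (0:ℝ) 1 :=
            Set.mem_Icc.2 ⟨by linarith [hxm.2], by linarith [hxm.2]⟩
          refine ⟨x, ⟨(x : ℝ) - δ, hmem1⟩, ?_, ?_⟩
          · show (x : ℝ) - δ < (x : ℝ)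
            linarith
          · show |(x : ℝ) - x| + |(x : ℝ) - δ - x| ≤ δ
            rw [show (x : ℝ) - δ - x = -δ by ring, sub_self, abs_zero, abs_neg,
              abs_of_pos hδpos]
            linarith
      obtain ⟨hlt, habsle⟩ := hqp
      have hpq : p ≠ q := by
        intro h
        rw [h] at hlt
        exact lt_irrefl _ hlt
      have hmem : (g p - g q) / dist p q ∈ {r : ℝ | ∃ p q : Set.Icc (0:ℝ) 1,
          p ≠ q ∧ r = (g p - g q) / dist p q} := ⟨p, q, hpq, rfl⟩
      have hbdd : BddAbove {r : ℝ | ∃ p q : Set.Icc (0:ℝ) 1, p ≠ q ∧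
          r = (g p - g q) / dist p q} := ⟨1, hub⟩
      have hle := le_csSup hbdd hmem
      -- lower bound on the chosen quotient
      have hlow : 1 - ε ≤ (g p - g q) / dist p q := by
        have h := phi_quot_ge (show (q : ℝ) - x < (p : ℝ) - x by linarith)
        have e : ((p : ℝ) - x) - ((q : ℝ) - x) = (p : ℝ) - q := by ring
        rw [e] at h
        rw [Subtype.dist_eq, Real.dist_eq, hgphi, hgphi]
        calc 1 - ε ≤ 1 - (|(p : ℝ) - x| + |(q : ℝ) - x|) / 2 := by linarith
          _ ≤ _ := h
      linarith
  refine ⟨⟨hlip, ha2⟩, ?_⟩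
  intro u v hne htend
  have h4 : Tendsto (fun n => 4 * (1 - (g (u n) - g (v n)) /
      |((u n : ℝ)) - ((v n : ℝ))|)) atTop (𝓝 (4 * (1 - 1))) :=
    (tendsto_const_nhds.sub htend).const_mul 4
  norm_num at h4
  have hconv : ∀ w : ℕ → Set.Icc (0:ℝ) 1,
      (∀ n, (g (u n) - g (v n)) / |((u n : ℝ)) - ((v n : ℝ))| ≤
        1 - |(w n : ℝ) - x| / 4) →
      Tendsto w atTop (𝓝 x) := by
    intro w hw
    have habs0 : Tendsto (fun n => |(w n : ℝ) - x|) atTop (𝓝 0) := by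
      apply squeeze_zero (fun n => abs_nonneg _) (fun n => ?_) h4
      have := hw n
      linarith
    have hco : Tendsto (fun n => ((w n : ℝ))) atTop (𝓝 (x : ℝ)) := by
      rw [tendsto_iff_dist_tendsto_zero]
      simpa [Real.dist_eq] using habs0
    exact tendsto_subtype_rng.2 hco
  exact ⟨hconv u fun n => (hQ (u n) (v n) (hne n)).1,
    hconv v fun n => (hQ (u n) (v n) (hne n)).2⟩
end

section
/- Let M be a metric space, L > 0, α: [0,L] → M an isometric embedding, and P: M → [0,L] a 1-Lipschitz map with P ∘ α = id on [0,L]. Let N be a connected metric space and φ: N → M a continuous map whose range φ(N) is dense in M. Then the open interval (0, L) is contained in P(φ(N)). -/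
open Filter Topology

/-- Let `α : [0,L] → M` be an isometric embedding (with `L > 0`) and
`P : M → [0,L]` an inverse projection of `α`. If `N` is a connected metric space and
`φ : N → M` is continuous with dense range, then `(0,L) ⊆ P(φ(N))`. -/
theorem stmt13 {M N : Type*} [MetricSpace M] [MetricSpace N] [ConnectedSpace N]
    (L : ℝ) (hL : 0 < L)
    (α : Set.Icc (0:ℝ) L → M) (hα : Isometry α)
    (P : M → Set.Icc (0:ℝ) L) (hP : LipschitzWith 1 P) (hPα : ∀ t, P (α t) = t)
    (φ : N → M) (hcont : Continuous φ) (hdense : DenseRange φ) :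
    ∀ z : Set.Icc (0:ℝ) L, 0 < (z : ℝ) → (z : ℝ) < L → ∃ w : N, P (φ w) = z := by
  intro z hz0 hzL
  set f : N → ℝ := fun w => (P (φ w) : ℝ) with hf
  have hfcont : Continuous f :=
    continuous_subtype_val.comp (hP.continuous.comp hcont)
  have hconn : IsPreconnected (Set.range f) :=
    (isConnected_range hfcont).isPreconnected
  have hord := hconn.ordConnected
  -- key: approximate α t to get f-values close to t
  have key : ∀ (t : Set.Icc (0:ℝ) L) (ε : ℝ), 0 < ε → ∃ w : N, |f w - (t : ℝ)| < ε := by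
    intro t ε hε
    obtain ⟨w, hw⟩ := hdense.exists_dist_lt (α t) hε
    refine ⟨w, ?_⟩
    have h1 : dist (P (φ w)) (P (α t)) ≤ 1 * dist (φ w) (α t) := hP.dist_le_mul _ _
    rw [hPα] at h1
    have h2 : dist (f w) (t : ℝ) = dist (P (φ w)) t := (Subtype.dist_eq _ _).symm
    rw [Real.dist_eq] at h2
    rw [h2]
    calc dist (P (φ w)) t ≤ 1 * dist (φ w) (α t) := h1
      _ = dist (α t) (φ w) := by rw [one_mul, dist_comm]
      _ < ε := hw
  obtain ⟨w0, hw0⟩ := key ⟨0, by simp [le_of_lt hL]⟩ z hz0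
  obtain ⟨w1, hw1⟩ := key ⟨L, by simp [le_of_lt hL]⟩ (L - z) (by linarith)
  have h0 : f w0 < z := by
    have h := abs_lt.1 hw0
    have e : ((⟨0, by simp [le_of_lt hL]⟩ : Set.Icc (0:ℝ) L) : ℝ) = 0 := rfl
    rw [e] at h
    linarith [h.2]
  have h1 : (z : ℝ) < f w1 := by
    have h := abs_lt.1 hw1
    have e : ((⟨L, by simp [le_of_lt hL]⟩ : Set.Icc (0:ℝ) L) : ℝ) = L := rfl
    rw [e] at h
    linarith [h.1]
  have hz : (z : ℝ) ∈ Set.range f :=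
    hord.out ⟨w0, rfl⟩ ⟨w1, rfl⟩ ⟨le_of_lt h0, le_of_lt h1⟩
  obtain ⟨w, hw⟩ := hz
  exact ⟨w, Subtype.ext hw⟩
end
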